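/- arXiv:2301.10380 — 5 statements merged into one kernel-verified Lean document; each statement's English description precedes it below -/
import Mathlib

section
/- Every rayless tree T contains a finite subtree that is invariant under every automorphism of T; consequently, every rayless tree has either a vertex or an edge fixed (setwise, for the edge) by all automorphisms. -/
open SimpleGraph

universe u

variable {V : Type u}

/-- `S` is an asymmetrizing set of `G`: the only automorphism of `G`
preserving `S` setwise is the identity. -/
def IsAsymmetrizing (G : SimpleGraph V) (S : Set V) : Prop :=
  ∀ φ : G ≃g G, (∀ v, φ v ∈ S ↔ v ∈ S) → ∀ v, φ v = v

/-- The number of pairwise inequivalent asymmetrizing sets of `G`,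
where two asymmetrizing sets are equivalent if some automorphism maps one onto the other. -/
noncomputable def asymNumber (G : SimpleGraph V) : Cardinal.{u} :=
  Cardinal.mk (Quot (fun S S' : {S : Set V // IsAsymmetrizing G S} =>
    ∃ φ : G ≃g G, (fun v => φ v) '' S.1 = S'.1))

/-- Every non-identity automorphism of `G` moves at least `m` vertices.
(This encodes "motion ≥ m", with the convention that asymmetric graphs
have motion exceeding every cardinal.) -/
def MotionAtLeast (G : SimpleGraph V) (m : Cardinal.{u}) : Prop :=
  ∀ φ : G ≃g G, (∃ v, φ v ≠ v) → m ≤ Cardinal.mk {v | φ v ≠ v}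

/-- `G` has motion exactly `m`: every non-identity automorphism moves at least `m`
vertices and some non-identity automorphism moves exactly `m` vertices. -/
def HasMotion (G : SimpleGraph V) (m : Cardinal.{u}) : Prop :=
  MotionAtLeast G m ∧
    ∃ φ : G ≃g G, (∃ v, φ v ≠ v) ∧ Cardinal.mk {v | φ v ≠ v} = m

/-- A graph is rayless if it contains no one-sided infinite path. -/
def Rayless (G : SimpleGraph V) : Prop :=
  ∀ f : ℕ → V, ¬ (Function.Injective f ∧ ∀ n, G.Adj (f n) (f (n + 1)))

/-- `f : ℤ → V` is a double ray (two-sided infinite path) in `G`. -/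
def IsDoubleRayIn (G : SimpleGraph V) (f : ℤ → V) : Prop :=
  Function.Injective f ∧ ∀ n, G.Adj (f n) (f (n + 1))

/-- In the tree `G` rooted at `w`, the set of descendants of `x` (including `x`):
those `v` such that `x` lies on every walk (in particular the unique path) from `w` to `v`. -/
def Desc (G : SimpleGraph V) (w x : V) : Set V :=
  {v | ∀ p : G.Walk w v, x ∈ p.support}

/-- In the tree `G` rooted at `w`, `x` is a child of `y`. -/
def IsChild (G : SimpleGraph V) (w y x : V) : Prop :=
  G.Adj y x ∧ x ∈ Desc G w y

/-- An automorphism of the induced subgraph on `D` fixes the vertex `x`. -/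
def RootedFixes (G : SimpleGraph V) (D : Set V) (x : V)
    (φ : G.induce D ≃g G.induce D) : Prop :=
  ∀ v : D, (v : V) = x → ((φ v : V) = x)

/-- `S` is an asymmetrizing set of the rooted graph `(G.induce D, x)`: the only
automorphism of `G.induce D` fixing `x` and preserving `S` setwise is the identity. -/
def RootedAsymmetrizing (G : SimpleGraph V) (D : Set V) (x : V) (S : Set V) : Prop :=
  ∀ φ : G.induce D ≃g G.induce D, RootedFixes G D x φ →
    (∀ v : D, ((φ v : V) ∈ S ↔ (v : V) ∈ S)) → ∀ v, φ v = v

/-- The number of inequivalent asymmetrizing sets of the rooted graph `(G.induce D, x)`,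
where equivalence is via automorphisms of `G.induce D` fixing the root `x`. -/
noncomputable def aRooted (G : SimpleGraph V) (D : Set V) (x : V) : Cardinal.{u} :=
  Cardinal.mk (Quot (fun S S' : {S : Set V // S ⊆ D ∧ RootedAsymmetrizing G D x S} =>
    ∃ φ : G.induce D ≃g G.induce D, RootedFixes G D x φ ∧
      (fun v : D => ((φ v : V))) '' {v : D | (v : V) ∈ S.1} = S'.1))

/-- The set of vertices of `G` lying on some double ray. -/
def Tstar (G : SimpleGraph V) : Set V :=
  {v | ∃ f : ℤ → V, IsDoubleRayIn G f ∧ ∃ n, f n = v}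

/-- The edges of `G` joining two vertices lying on double rays. -/
def TstarEdges (G : SimpleGraph V) : Set (Sym2 V) :=
  {e | ∃ a b, e = s(a, b) ∧ G.Adj a b ∧ a ∈ Tstar G ∧ b ∈ Tstar G}

/-- `y` lies on all shortest paths from `x` to `w` in `G`. -/
def OnAllShortest (G : SimpleGraph V) (w y x : V) : Prop :=
  ∀ p : G.Walk x w, p.length = G.dist x w → y ∈ p.support


/-!
By Zorn's lemma there is a minimal nonempty vertex set `M` that is invariant under all
automorphisms and contains every path between two of its vertices: in a rayless graph a chain of
such sets has nonempty intersection, for otherwise paths entering ever smaller members of the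
chain would grow into a ray. Deleting the leaves of `M` preserves both properties, so by
minimality `M` is either leafless or consists of leaves only. A leafless subtree with two
vertices contains a ray, so in the first case `M` is a single vertex; in the second case `M` is
a single edge.
-/

namespace SimpleGraph

variable {G : SimpleGraph V}

/-- In a tree these are exactly the vertex sets of subtrees. -/
def IsPathConvex (G : SimpleGraph V) (S : Set V) : Prop :=
  ∀ ⦃a b : V⦄, a ∈ S → b ∈ S → ∀ p : G.Walk a b, p.IsPath → ∀ x ∈ p.support, x ∈ S

def IsAutInvariant (G : SimpleGraph V) (S : Set V) : Prop :=
  ∀ φ : G ≃g G, ∀ v ∈ S, φ v ∈ S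

def pruneLeaves (G : SimpleGraph V) (M : Set V) : Set V :=
  {v ∈ M | ¬ ∃! u, u ∈ M ∧ G.Adj v u}

theorem pruneLeaves_subset (M : Set V) : G.pruneLeaves M ⊆ M := fun _ hv => hv.1

namespace IsAutInvariant

variable {S : Set V}

theorem map_mem_iff (hS : G.IsAutInvariant S) (φ : G ≃g G) {v : V} : φ v ∈ S ↔ v ∈ S :=
  ⟨fun h => by simpa using hS φ.symm _ h, hS φ v⟩

theorem image_eq (hS : G.IsAutInvariant S) (φ : G ≃g G) : φ '' S = S :=
  (Set.image_subset_iff.2 (hS φ)).antisymm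
    fun v hv => ⟨φ.symm v, hS φ.symm v hv, φ.apply_symm_apply v⟩

theorem pruneLeaves (hS : G.IsAutInvariant S) : G.IsAutInvariant (G.pruneLeaves S) := by
  rintro φ v ⟨hv, hleaf⟩
  refine ⟨hS φ v hv, fun h => hleaf ?_⟩
  refine (φ.toEquiv.existsUnique_congr fun u => ?_).2 h
  simp [hS.map_mem_iff, φ.map_adj_iff]

end IsAutInvariant

theorem Walk.IsPath.append_of_support_inter {u v w : V} {p : G.Walk u v} {q : G.Walk v w}
    (hp : p.IsPath) (hq : q.IsPath) (h : ∀ x ∈ p.support, x ∈ q.support → x = v) :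
    (p.append q).IsPath := by
  have hq' := hq.support_nodup
  rw [← Walk.cons_tail_support, List.nodup_cons] at hq'
  rw [Walk.isPath_def, Walk.support_append, List.nodup_append]
  refine ⟨hp.support_nodup, hq'.2, fun x hxp y hyq hxy => ?_⟩
  subst hxy
  exact hq'.1 (h x hxp (List.mem_of_mem_tail hyq) ▸ hyq)

theorem Walk.IsPath.not_existsUnique_adj {a b x : V} {p : G.Walk a b} (hp : p.IsPath)
    {S : Set V} (hS : ∀ y ∈ p.support, y ∈ S) (hx : x ∈ p.support) (hxa : x ≠ a)
    (hxb : x ≠ b) : ¬ ∃! u, u ∈ S ∧ G.Adj x u := by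
  obtain ⟨i, rfl, hi⟩ := Walk.mem_support_iff_exists_getVert.1 hx
  have hi0 : i ≠ 0 := by rintro rfl; simp at hxa
  have hil : i ≠ p.length := by rintro rfl; simp at hxb
  rintro ⟨z, -, hz⟩
  have hprev : p.getVert (i - 1) = z := by
    refine hz _ ⟨hS _ (p.getVert_mem_support _), ?_⟩
    have := p.adj_getVert_succ (i := i - 1) (by omega)
    rw [Nat.sub_add_cancel (Nat.pos_of_ne_zero hi0)] at this
    exact this.symm
  have hnext : p.getVert (i + 1) = z :=
    hz _ ⟨hS _ (p.getVert_mem_support _), p.adj_getVert_succ (by omega)⟩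
  have := hp.getVert_injOn (by simp; omega) (by simp; omega) (hprev.trans hnext.symm)
  omega

namespace IsPathConvex

variable {M : Set V}

theorem pruneLeaves (hM : G.IsPathConvex M) : G.IsPathConvex (G.pruneLeaves M) := by
  intro a b ha hb p hp x hx
  by_cases hxa : x = a
  · exact hxa ▸ ha
  by_cases hxb : x = b
  · exact hxb ▸ hb
  have hpM := hM ha.1 hb.1 p hp
  exact ⟨hpM x hx, hp.not_existsUnique_adj hpM hx hxa hxb⟩

theorem exists_adj_mem (hM : G.IsPathConvex M) (hconn : G.Connected) {x t : V} (hx : x ∈ M)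
    (ht : t ∈ M) (hxt : x ≠ t) : ∃ y ∈ M, G.Adj x y := by
  obtain ⟨p, hp, -⟩ := hconn.exists_path_of_dist x t
  have hnil : ¬ p.Nil := fun h => hxt h.eq
  exact ⟨p.snd, hM hx ht p hp _ (p.getVert_mem_support 1), p.adj_snd hnil⟩

end IsPathConvex

theorem _root_.Rayless.false_of_append_seq (hray : Rayless G) {v₀ : V} {x : ℕ → V}
    (W : ∀ n, G.Walk v₀ (x n)) (hW : ∀ n, (W n).IsPath) (q : ∀ n, G.Walk (x n) (x (n + 1)))
    (hq : ∀ n, ¬ (q n).Nil) (happend : ∀ n, W (n + 1) = (W n).append (q n)) : False := by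
  have hmono : StrictMono fun n => (W n).length := strictMono_nat_of_lt_succ fun n => by
    have := Walk.not_nil_iff_lt_length.1 (hq n)
    simp only [happend, Walk.length_append]
    omega
  have hprefix : ∀ m n, m ≤ n → ∀ k ≤ (W m).length, (W n).getVert k = (W m).getVert k := by
    intro m n hmn k hk
    induction n, hmn using Nat.le_induction with
    | base => rfl
    | succ n hmn ih =>
      rw [happend, Walk.getVert_append', if_pos (hk.trans (hmono.monotone hmn)), ih]
  have hlen (m n : ℕ) (hmn : m ≤ n) : m ≤ (W n).length := hmn.trans (hmono.id_le n)
  have hstable (m n : ℕ) (hmn : m ≤ n) : (W n).getVert m = (W m).getVert m :=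
    hprefix m n hmn m (hlen m m le_rfl)
  refine hray (fun n => (W n).getVert n) ⟨fun i j hij => ?_, fun n => ?_⟩
  · refine (hW (max i j)).getVert_injOn (hlen i _ (le_max_left i j))
      (hlen j _ (le_max_right i j)) ?_
    simpa only [hstable i _ (le_max_left i j), hstable j _ (le_max_right i j)] using hij
  · rw [← hstable n (n + 1) n.le_succ]
    exact (W (n + 1)).adj_getVert_succ (hlen (n + 1) _ le_rfl)

theorem _root_.Rayless.not_of_forall_extend (hray : Rayless G) {v₀ : V}
    (P : ∀ ⦃x⦄, G.Walk v₀ x → Prop) (hP : ∀ ⦃x⦄ (W : G.Walk v₀ x), P W → W.IsPath)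
    (hext : ∀ ⦃x⦄ (W : G.Walk v₀ x), P W → ∃ y, ∃ q : G.Walk x y, ¬ q.Nil ∧ P (W.append q))
    {x : V} (W : G.Walk v₀ x) : ¬ P W := by
  intro hW
  choose y q hq hPq using hext
  let s : ℕ → Σ x, {W : G.Walk v₀ x // P W} := fun n =>
    Nat.rec ⟨x, W, hW⟩ (fun _ s => ⟨y s.2.1 s.2.2, _, hPq s.2.1 s.2.2⟩) n
  exact hray.false_of_append_seq (fun n => (s n).2.1) (fun n => hP _ (s n).2.2)
    (fun n => q (s n).2.1 (s n).2.2) (fun n => hq _ _) (fun n => rfl)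

theorem Connected.exists_isPath_mem_iff_eq_end (hconn : G.Connected) {S : Set V}
    (hS : S.Nonempty) (x : V) :
    ∃ u ∈ S, ∃ q : G.Walk x u, q.IsPath ∧ ∀ y ∈ q.support, y ∈ S ↔ y = u := by
  classical
  -- a shortest path to a vertex of `S` nearest to `x` meets `S` nowhere earlier
  obtain ⟨u, huS, hmin⟩ : ∃ u ∈ S, ∀ y ∈ S, G.dist x u ≤ G.dist x y :=
    ⟨_, Function.argminOn_mem _ S hS, fun y hy => Function.argminOn_le _ S hy⟩
  obtain ⟨q, hq, hlen⟩ := hconn.exists_path_of_dist x u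
  refine ⟨u, huS, q, hq, fun y hy => ⟨fun hyS => ?_, fun hyu => hyu ▸ huS⟩⟩
  by_contra hyu
  have h₁ := Walk.length_takeUntil_lt_length hy hyu
  have h₂ := dist_le (q.takeUntil y hy)
  have h₃ := hmin y hyS
  omega

theorem _root_.Rayless.sInter_nonempty_of_isChain (hray : Rayless G) (hconn : G.Connected)
    {c : Set (Set V)} (hc : IsChain (· ⊆ ·) c) (hcne : c.Nonempty)
    (hne : ∀ S ∈ c, S.Nonempty) (hconv : ∀ S ∈ c, G.IsPathConvex S) : (⋂₀ c).Nonempty := by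
  by_contra hempty
  have hout : ∀ v, ∃ S ∈ c, v ∉ S := fun v => by
    by_contra! h
    exact hempty ⟨v, h⟩
  obtain ⟨S₀, hS₀⟩ := hcne
  obtain ⟨x₀, hx₀⟩ := hne S₀ hS₀
  refine hray.not_of_forall_extend
    (fun x W => W.IsPath ∧ ∃ S ∈ c, ∀ y ∈ W.support, y ∈ S ↔ y = x) (fun _ _ h => h.1) ?_
    (Walk.nil : G.Walk x₀ x₀) ⟨.nil, S₀, hS₀, by simpa using hx₀⟩
  rintro x W ⟨hW, S, hS, hWS⟩
  have hxS : x ∈ S := (hWS x W.end_mem_support).2 rfl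
  obtain ⟨S', hS', hxS'⟩ := hout x
  have hS'S : S' ⊆ S := (hc.total hS' hS).resolve_right fun h => hxS' (h hxS)
  obtain ⟨u, huS', q, hq, hqS'⟩ := hconn.exists_isPath_mem_iff_eq_end (hne S' hS') x
  have hqS : ∀ y ∈ q.support, y ∈ S := hconv S hS hxS (hS'S huS') q hq
  refine ⟨u, q, fun hnil => hxS' (hnil.eq ▸ huS'), ?_, S', hS', fun y hy => ?_⟩
  · exact hW.append_of_support_inter hq fun y hyW hyq => (hWS y hyW).1 (hqS y hyq)
  rcases (Walk.mem_support_append_iff _ _).1 hy with hyW | hyq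
  · have hyS' : y ∉ S' := fun h => hxS' ((hWS y hyW).1 (hS'S h) ▸ h)
    exact iff_of_false hyS' fun hyu => hyS' (hyu ▸ huS')
  · exact hqS' y hyq

theorem _root_.Rayless.exists_minimal_isAutInvariant_isPathConvex (hray : Rayless G)
    (hconn : G.Connected) :
    ∃ M, Minimal (fun S : Set V => S.Nonempty ∧ G.IsAutInvariant S ∧ G.IsPathConvex S) M := by
  set good := {S : Set V | S.Nonempty ∧ G.IsAutInvariant S ∧ G.IsPathConvex S}
  have hchain : ∀ c ⊆ good, IsChain (· ⊆ ·) c → c.Nonempty → ∃ lb ∈ good, ∀ S ∈ c, lb ⊆ S := by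
    intro c hc hchain hcne
    refine ⟨⋂₀ c, ⟨?_, ?_, ?_⟩, fun S hS => Set.sInter_subset_of_mem hS⟩
    · exact hray.sInter_nonempty_of_isChain hconn hchain hcne (fun S hS => (hc hS).1)
        fun S hS => (hc hS).2.2
    · exact fun φ v hv => Set.mem_sInter.2 fun S hS => (hc hS).2.1 φ v (hv S hS)
    · exact fun a b ha hb p hp x hx =>
        Set.mem_sInter.2 fun S hS => (hc hS).2.2 (ha S hS) (hb S hS) p hp x hx
  obtain ⟨v⟩ := hconn.nonempty
  obtain ⟨M, -, hM⟩ := zorn_superset_nonempty good hchain Set.univ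
    ⟨⟨v, trivial⟩, fun _ _ _ => trivial, fun _ _ _ _ _ _ _ _ => trivial⟩
  exact ⟨M, hM⟩

theorem IsTree.subsingleton_of_isPathConvex (hT : G.IsTree) (hray : Rayless G) {M : Set V}
    (hM : G.IsPathConvex M) (hleaf : ∀ v ∈ M, ¬ ∃! u, u ∈ M ∧ G.Adj v u) : M.Subsingleton := by
  refine Set.not_nontrivial_iff.1 fun hM₂ => ?_
  obtain ⟨u₀, hu₀⟩ := hM₂.nonempty
  refine hray.not_of_forall_extend (fun x W => W.IsPath ∧ ∀ y ∈ W.support, y ∈ M)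
    (fun _ _ h => h.1) ?_ (Walk.nil : G.Walk u₀ u₀) ⟨.nil, by simpa using hu₀⟩
  rintro x W ⟨hW, hWM⟩
  have hx : x ∈ M := hWM x W.end_mem_support
  obtain ⟨t, ht, htx⟩ := hM₂.exists_ne x
  obtain ⟨y, hy, hxy⟩ := hM.exists_adj_mem hT.connected hx ht htx.symm
  obtain ⟨z, ⟨hz, hxz⟩, hzy⟩ : ∃ z, (z ∈ M ∧ G.Adj x z) ∧ z ≠ y := by
    by_contra! h
    exact hleaf x hx ⟨y, ⟨hy, hxy⟩, fun z hz => h z hz⟩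
  -- in a tree only the penultimate vertex of `W` is adjacent to `x`
  obtain ⟨w, hw, hxw, hwW⟩ : ∃ w ∈ M, G.Adj x w ∧ w ∉ W.support := by
    by_cases hyW : y ∈ W.support
    · refine ⟨z, hz, hxz, fun hzW => hzy ?_⟩
      rw [hT.isAcyclic.eq_penultimate_of_adj_end hW hxz hzW,
        hT.isAcyclic.eq_penultimate_of_adj_end hW hxy hyW]
    · exact ⟨y, hy, hxy, hyW⟩
  refine ⟨w, hxw.toWalk, Walk.not_nil_cons, ?_, fun v hv => ?_⟩
  · rw [← Walk.concat_eq_append]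
    exact hW.concat hwW hxw
  · rcases (Walk.mem_support_append_iff _ _).1 hv with hvW | hv
    · exact hWM v hvW
    · simp only [Adj.toWalk, Walk.support_cons, Walk.support_nil, List.mem_cons,
        List.not_mem_nil, or_false] at hv
      rcases hv with rfl | rfl <;> assumption

theorem IsPathConvex.eq_pair_of_forall_existsUnique_adj {M : Set V} (hM : G.IsPathConvex M)
    (hconn : G.Connected) (hleaf : ∀ v ∈ M, ∃! u, u ∈ M ∧ G.Adj v u) {u₀ : V} (hu₀ : u₀ ∈ M) :
    ∃ u₁, G.Adj u₀ u₁ ∧ M = {u₀, u₁} := by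
  obtain ⟨u₁, ⟨hu₁, h₀₁⟩, huniq₀⟩ := hleaf u₀ hu₀
  refine ⟨u₁, h₀₁, subset_antisymm (fun x hx => ?_) (Set.insert_subset hu₀ (by simpa))⟩
  obtain ⟨p, hp, -⟩ := hconn.exists_path_of_dist u₀ x
  have hpM := hM hu₀ hx p hp
  rcases p with _ | ⟨h, _ | ⟨h', q⟩⟩
  · exact Or.inl rfl
  · exact Or.inr (huniq₀ _ ⟨hx, h⟩)
  · rename_i v w
    obtain rfl : v = u₁ := huniq₀ v ⟨hpM v (by simp), h⟩
    obtain rfl : w = u₀ := (hleaf v hu₁).unique ⟨hpM w (by simp), h'⟩ ⟨hu₀, h₀₁.symm⟩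
    exact absurd ((Walk.cons_isPath_iff _ _).1 hp).2 (by simp)

theorem IsTree.exists_isAutInvariant_singleton_or_pair (hT : G.IsTree) (hray : Rayless G) :
    (∃ m, G.IsAutInvariant {m}) ∨ ∃ u v, G.Adj u v ∧ G.IsAutInvariant {u, v} := by
  obtain ⟨M, ⟨⟨m, hm⟩, hinv, hconv⟩, hmin⟩ :=
    hray.exists_minimal_isAutInvariant_isPathConvex hT.connected
  by_cases hP : (G.pruneLeaves M).Nonempty
  · have hMP : M ⊆ G.pruneLeaves M :=
      hmin ⟨hP, hinv.pruneLeaves, hconv.pruneLeaves⟩ (pruneLeaves_subset M)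
    have hsub : M.Subsingleton := hT.subsingleton_of_isPathConvex hray hconv fun v hv => (hMP hv).2
    exact Or.inl ⟨m, hsub.eq_singleton_of_mem hm ▸ hinv⟩
  · have hleaf : ∀ v ∈ M, ∃! u, u ∈ M ∧ G.Adj v u := fun v hv => by
      by_contra h
      exact hP ⟨v, hv, h⟩
    obtain ⟨u, hmu, rfl⟩ := hconv.eq_pair_of_forall_existsUnique_adj hT.connected hleaf hm
    exact Or.inr ⟨m, u, hmu, hinv⟩

end SimpleGraph

/-- Every rayless tree contains a finite nonempty subtree invariant under all
automorphisms; consequently it has a vertex fixed by all automorphisms, or an edge fixed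
setwise by all automorphisms. -/
theorem rayless_tree_finite_invariant_subtree (G : SimpleGraph V) (hT : G.IsTree)
    (hray : Rayless G) :
    (∃ F : Set V, F.Finite ∧ F.Nonempty ∧ (G.induce F).Connected ∧
        ∀ φ : G ≃g G, ∀ v ∈ F, φ v ∈ F) ∧
      ((∃ v, ∀ φ : G ≃g G, φ v = v) ∨
        ∃ u v, G.Adj u v ∧ ∀ φ : G ≃g G, ({φ u, φ v} : Set V) = {u, v}) := by
  rcases hT.exists_isAutInvariant_singleton_or_pair hray with ⟨m, hm⟩ | ⟨u, v, huv, huv_inv⟩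
  · exact ⟨⟨{m}, Set.finite_singleton m, Set.singleton_nonempty m, .of_subsingleton, hm⟩,
      Or.inl ⟨m, fun φ => hm φ m rfl⟩⟩
  · refine ⟨⟨{u, v}, Set.toFinite _, Set.insert_nonempty u {v}, induce_pair_connected_of_adj huv,
      huv_inv⟩, Or.inr ⟨u, v, huv, fun φ => ?_⟩⟩
    rw [← Set.image_pair]
    exact huv_inv.image_eq φ
end

section
/- Let m be an infinite cardinal. The tree T obtained by taking strictly more than 2^m pairwise isomorphic asymmetric rooted trees of order m and joining all their roots to one additional common vertex is not asymmetrizable. -/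
open SimpleGraph

universe u

variable {V : Type u}

/-!
Any set `S` of vertices leaves a trace `{w | (i, w) ∈ S}` on each branch `i`, a subset of the
`m`-element vertex set of the branch. There are only `2 ^ m` such subsets but more than `2 ^ m`
branches, so two distinct branches `i ≠ j` carry the same trace, and swapping them is a
non-identity automorphism of the star that preserves `S`.
-/

def SimpleGraph.Iso.fromRel {α : Type*} {r : α → α → Prop} (e : α ≃ α)
    (he : ∀ a b, r (e a) (e b) ↔ r a b) : fromRel r ≃g fromRel r :=
  ⟨e, fun {a b} => by simp only [fromRel_adj, he, e.injective.ne_iff]⟩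

section StarOfBranches

variable {I W : Type u} (B : SimpleGraph W) (r : W)

/-- Vertex `some (i, w)` is the copy of `w` in branch `i`; `none` is the centre, adjacent to the
roots `some (i, r)`. -/
def StarRel (a b : Option (I × W)) : Prop :=
  (∃ i x y, a = some (i, x) ∧ b = some (i, y) ∧ B.Adj x y) ∨ (∃ i, a = none ∧ b = some (i, r))

def permuteBranches (σ : Equiv.Perm I) : Option (I × W) ≃ Option (I × W) :=
  Equiv.optionCongr (σ.prodCongr (Equiv.refl W))

@[simp]
lemma permuteBranches_none (σ : Equiv.Perm I) : permuteBranches σ (none : Option (I × W)) = none :=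
  rfl

@[simp]
lemma permuteBranches_some (σ : Equiv.Perm I) (i : I) (w : W) :
    permuteBranches σ (some (i, w)) = some (σ i, w) :=
  rfl

lemma starRel_permuteBranches_of_starRel (σ : Equiv.Perm I) {a b : Option (I × W)}
    (h : StarRel B r a b) : StarRel B r (permuteBranches σ a) (permuteBranches σ b) := by
  rcases h with ⟨i, x, y, rfl, rfl, hxy⟩ | ⟨i, rfl, rfl⟩
  · exact Or.inl ⟨σ i, x, y, rfl, rfl, hxy⟩
  · exact Or.inr ⟨σ i, rfl, rfl⟩

lemma starRel_permuteBranches_iff (σ : Equiv.Perm I) (a b : Option (I × W)) :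
    StarRel B r (permuteBranches σ a) (permuteBranches σ b) ↔ StarRel B r a b := by
  refine ⟨fun h => ?_, starRel_permuteBranches_of_starRel B r σ⟩
  have inv : ∀ c : Option (I × W), permuteBranches σ⁻¹ (permuteBranches σ c) = c := by
    rintro (_ | ⟨i, w⟩) <;> simp
  simpa only [inv] using starRel_permuteBranches_of_starRel B r σ⁻¹ h

def permuteBranchesIso (σ : Equiv.Perm I) :
    fromRel (StarRel (I := I) B r) ≃g fromRel (StarRel (I := I) B r) :=
  Iso.fromRel (permuteBranches σ) (starRel_permuteBranches_iff B r σ)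

variable {B r}

def branchTrace (S : Set (Option (I × W))) (i : I) : Set W :=
  {w | some (i, w) ∈ S}

lemma permuteBranches_mem_iff {S : Set (Option (I × W))} {σ : Equiv.Perm I}
    (hσ : ∀ i, branchTrace S (σ i) = branchTrace S i) (v : Option (I × W)) :
    permuteBranches σ v ∈ S ↔ v ∈ S := by
  rcases v with _ | ⟨i, w⟩
  · rfl
  · exact Set.ext_iff.mp (hσ i) w

lemma not_isAsymmetrizing_of_branchTrace_eq {S : Set (Option (I × W))} {i j : I} (hij : i ≠ j)
    (hS : branchTrace S i = branchTrace S j) :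
    ¬ IsAsymmetrizing (fromRel (StarRel B r)) S := by
  classical
  intro hasym
  have hswap : ∀ k, branchTrace S (Equiv.swap i j k) = branchTrace S k := by
    intro k
    rcases eq_or_ne k i with rfl | hki
    · rw [Equiv.swap_apply_left, hS]
    rcases eq_or_ne k j with rfl | hkj
    · rw [Equiv.swap_apply_right, hS]
    · rw [Equiv.swap_apply_of_ne_of_ne hki hkj]
  have hfix := hasym (permuteBranchesIso B r (Equiv.swap i j)) (permuteBranches_mem_iff hswap)
    (some (i, r))
  change some (Equiv.swap i j i, r) = some (i, r) at hfix
  simp only [Equiv.swap_apply_left, Option.some.injEq, Prod.mk.injEq, and_true] at hfix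
  exact hij hfix.symm

end StarOfBranches

lemma not_injective_of_two_pow_mk_lt {I W : Type u} (f : I → Set W)
    (h : 2 ^ Cardinal.mk W < Cardinal.mk I) : ¬ Function.Injective f := fun hf =>
  (Cardinal.mk_le_of_injective hf).not_gt (by rwa [Cardinal.mk_set])

theorem star_of_branches_not_asymmetrizable_general {W : Type u} {I : Type u}
    (m : Cardinal.{u})
    (B : SimpleGraph W) (r : W) (hW : Cardinal.mk W = m)
    (hI : 2 ^ m < Cardinal.mk I) :
    ¬ ∃ S : Set (Option (I × W)),
      IsAsymmetrizing (SimpleGraph.fromRel (fun a b =>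
        (∃ i x y, a = some (i, x) ∧ b = some (i, y) ∧ B.Adj x y) ∨
          (∃ i, a = none ∧ b = some (i, r)))) S := by
  rintro ⟨S, hS⟩
  obtain ⟨i, j, hij_trace, hij⟩ :=
    Function.not_injective_iff.mp (not_injective_of_two_pow_mk_lt (branchTrace S) (hW ▸ hI))
  exact not_isAsymmetrizing_of_branchTrace_eq hij hij_trace hS

/-- The tree obtained by joining more than `2^m` disjoint copies of an
asymmetric rooted tree of order `m` (an infinite cardinal) to one common additional
vertex is not asymmetrizable. -/
theorem star_of_branches_not_asymmetrizable {W : Type u} {I : Type u}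
    (m : Cardinal.{u}) (hm : Cardinal.aleph0 ≤ m)
    (B : SimpleGraph W) (r : W) (hB : B.IsTree) (hW : Cardinal.mk W = m)
    (hasym : ∀ φ : B ≃g B, φ r = r → ∀ v, φ v = v)
    (hI : 2 ^ m < Cardinal.mk I) :
    ¬ ∃ S : Set (Option (I × W)),
      IsAsymmetrizing (SimpleGraph.fromRel (fun a b =>
        (∃ i x y, a = some (i, x) ∧ b = some (i, y) ∧ B.Adj x y) ∨
          (∃ i, a = none ∧ b = some (i, r)))) S :=
  star_of_branches_not_asymmetrizable_general m B r hW hI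
end

section
/- Let α be an infinite cardinal and T a tree in which every vertex has degree exactly α. Then the motion of T equals α. -/
open SimpleGraph

universe u

variable {V : Type u}

/-!
If `φ` moves `v`, every neighbour of `v` fixed by `φ` is a common neighbour of `v` and `φ v`,
and two distinct vertices of a tree have at most one common neighbour; so `φ` moves all but at
most one of the `α` neighbours of `v`, and the motion is at least `α`.

Conversely, root the tree at `r`. Every vertex has `α` children (for `v ≠ r`, its `α` neighbours
other than its parent), so labelling the children of each vertex bijectively by a fixed type `A`
of cardinality `α` identifies the tree with the tree of words over `A`, in which `l` is adjacent
to `a :: l`. A transposition of `A` acting letterwise on words is a non-identity automorphism,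
and it moves at most `#(List A) = α` vertices.
-/

open Cardinal

theorem Cardinal.le_of_le_add_one_of_aleph0_le {α β : Cardinal} (hα : ℵ₀ ≤ α)
    (h : α ≤ β + 1) : α ≤ β :=
  not_lt.mp fun hβ => (add_one_lt_of_lt hα hβ).not_ge h

namespace SimpleGraph

variable {G : SimpleGraph V}

theorem IsAcyclic.commonNeighbors_subsingleton (hG : G.IsAcyclic) {v w : V} (hvw : v ≠ w) :
    (G.commonNeighbors v w).Subsingleton := by
  have hpath : ∀ {u} (hvu : G.Adj v u) (huw : G.Adj u w),
      (Walk.cons hvu (Walk.cons huw Walk.nil)).IsPath := fun hvu huw => by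
    simp [Walk.cons_isPath_iff, hvw, hvu.ne, huw.ne]
  intro u hu u' hu'
  rw [mem_commonNeighbors] at hu hu'
  have := (hG.subsingleton_path v w).elim ⟨_, hpath hu.1 hu.2.symm⟩ ⟨_, hpath hu'.1 hu'.2.symm⟩
  simpa using congrArg (fun p : G.Path v w => p.1.snd) this

theorem IsAcyclic.motionAtLeast (hG : G.IsAcyclic) {α : Cardinal.{u}} (hα : ℵ₀ ≤ α)
    (hdeg : ∀ v, α ≤ #(G.neighborSet v)) : MotionAtLeast G α := by
  rintro φ ⟨v, hv⟩
  set M := {u | φ u ≠ u}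
  have hsub : G.neighborSet v ⊆ G.commonNeighbors v (φ v) ∪ M := fun u hu => by
    by_cases hfix : φ u = u
    · exact Or.inl ⟨hu, by simpa [hfix] using φ.map_adj_iff.mpr hu⟩
    · exact Or.inr hfix
  have hC := (hG.commonNeighbors_subsingleton (Ne.symm hv)).cardinalMk_le_one
  refine le_of_le_add_one_of_aleph0_le hα ?_
  calc α ≤ #(G.neighborSet v) := hdeg v
    _ ≤ #↥(G.commonNeighbors v (φ v) ∪ M) := mk_le_mk_of_subset hsub
    _ ≤ #(G.commonNeighbors v (φ v)) + #M := mk_union_le _ _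
    _ ≤ #M + 1 := by rw [add_comm]; gcongr

def children (G : SimpleGraph V) (r x : V) : Set V :=
  {w | G.Adj x w ∧ G.dist r w = G.dist r x + 1}

namespace IsTree

variable (hG : G.IsTree) (r : V)
include hG

theorem adj_iff_mem_children {x y : V} :
    G.Adj x y ↔ y ∈ G.children r x ∨ x ∈ G.children r y := by
  refine ⟨fun h => ?_, ?_⟩
  · rcases hG.dist_eq_dist_add_one_of_adj r h with hd | hd
    exacts [Or.inr ⟨h.symm, hd⟩, Or.inl ⟨h, hd⟩]
  · rintro (h | h)
    exacts [h.1, h.1.symm]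

theorem exists_mem_children {w : V} (hw : w ≠ r) : ∃ x, w ∈ G.children r x := by
  obtain ⟨q, -, hq⟩ := hG.connected.exists_path_of_dist w r
  have hnil : ¬q.Nil := Walk.not_nil_of_ne hw
  have hlen := q.length_tail_add_one hnil
  have hle : G.dist q.snd r ≤ q.tail.length := dist_le _
  have hw' : G.dist r w = G.dist w r := dist_comm
  have hx' : G.dist r q.snd = G.dist q.snd r := dist_comm
  refine ⟨q.snd, (q.adj_snd hnil).symm, ?_⟩
  have := hG.dist_eq_dist_add_one_of_adj r (q.adj_snd hnil)
  omega

theorem eq_of_mem_children {w x x' : V} (hx : w ∈ G.children r x) (hx' : w ∈ G.children r x') :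
    x = x' := by
  have hpath : ∀ {y}, w ∈ G.children r y → ∃ p : G.Path r w, p.1.penultimate = y := by
    intro y hy
    obtain ⟨p, -, hp⟩ := hG.connected.exists_path_of_dist r y
    refine ⟨⟨p.concat hy.1, (p.concat hy.1).isPath_of_length_eq_dist ?_⟩,
      p.penultimate_concat hy.1⟩
    rw [Walk.length_concat, hp, hy.2]
  obtain ⟨p, rfl⟩ := hpath hx
  obtain ⟨p', rfl⟩ := hpath hx'
  rw [(hG.isAcyclic.subsingleton_path r w).elim p p']

theorem exists_neighborSet_subset_insert_children (x : V) :
    ∃ y, G.neighborSet x ⊆ insert y (G.children r x) := by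
  by_cases hx : ∃ y, x ∈ G.children r y
  · obtain ⟨y, hy⟩ := hx
    refine ⟨y, fun u hu => ?_⟩
    rcases (hG.adj_iff_mem_children r).mp hu with h | h
    exacts [Or.inr h, Or.inl (hG.eq_of_mem_children r h hy)]
  · refine ⟨x, fun u hu => ?_⟩
    rcases (hG.adj_iff_mem_children r).mp hu with h | h
    exacts [Or.inr h, absurd ⟨u, h⟩ hx]

theorem mk_children_eq {α : Cardinal.{u}} (hα : ℵ₀ ≤ α) (hdeg : ∀ v, #(G.neighborSet v) = α)
    (x : V) : #(G.children r x) = α := by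
  obtain ⟨y, hy⟩ := hG.exists_neighborSet_subset_insert_children r x
  refine le_antisymm ((mk_le_mk_of_subset fun _ h => h.1).trans (hdeg x).le)
    (le_of_le_add_one_of_aleph0_le hα ?_)
  calc α = #(G.neighborSet x) := (hdeg x).symm
    _ ≤ #↥(insert y (G.children r x)) := mk_le_mk_of_subset hy
    _ ≤ #(G.children r x) + 1 := mk_insert_le

end IsTree

def listTree (A : Type*) : SimpleGraph (List A) :=
  fromRel fun l l' => ∃ a, l' = a :: l

variable {A B : Type*}

theorem listTree_adj {l l' : List A} :
    (listTree A).Adj l l' ↔ (∃ a, l' = a :: l) ∨ ∃ a, l = a :: l' := by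
  refine ⟨fun h => h.2, fun h => ⟨?_, h⟩⟩
  rintro rfl
  rcases h with ⟨a, h⟩ | ⟨a, h⟩ <;> exact List.cons_ne_self a l h.symm

theorem listTree_adj_map (f : A → B) {l l' : List A} (h : (listTree A).Adj l l') :
    (listTree B).Adj (l.map f) (l'.map f) := by
  rw [listTree_adj] at h ⊢
  rcases h with ⟨a, rfl⟩ | ⟨a, rfl⟩
  exacts [Or.inl ⟨f a, rfl⟩, Or.inr ⟨f a, rfl⟩]

def listTree.mapIso (σ : A ≃ B) : listTree A ≃g listTree B where
  toEquiv := Equiv.listEquivOfEquiv σ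
  map_rel_iff' {l l'} := by
    refine ⟨fun h => ?_, listTree_adj_map σ⟩
    simpa [Equiv.listEquivOfEquiv, List.map_map] using listTree_adj_map σ.symm h

def descend (r : V) (e : ∀ x, G.children r x ≃ A) : List A → V
  | [] => r
  | a :: l => (e (descend r e l)).symm a

section descend

variable {r : V} (e : ∀ x, G.children r x ≃ A)

theorem descend_cons_mem_children (a : A) (l : List A) :
    descend r e (a :: l) ∈ G.children r (descend r e l) :=
  ((e _).symm a).2

theorem dist_descend (l : List A) : G.dist r (descend r e l) = l.length := by
  induction l with
  | nil => exact dist_self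
  | cons a l ih => rw [(descend_cons_mem_children e a l).2, ih, List.length_cons]

variable (hG : G.IsTree)
include hG

theorem descend_injective : Function.Injective (descend r e) := by
  intro l l' h
  induction l generalizing l' with
  | nil =>
    have := dist_descend e l'
    rw [← h, dist_descend] at this
    exact (List.length_eq_zero_iff.mp this.symm).symm
  | cons a l ih =>
    cases l' with
    | nil => simpa [dist_descend] using congrArg (G.dist r) h
    | cons a' l' =>
      obtain rfl := ih <| hG.eq_of_mem_children r
        (descend_cons_mem_children e a l) (h ▸ descend_cons_mem_children e a' l')
      rw [(e _).symm.injective (Subtype.ext h)]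

theorem descend_surjective : Function.Surjective (descend r e) := by
  suffices ∀ n w, G.dist r w = n → ∃ l, descend r e l = w from fun w => this _ w rfl
  intro n
  induction n with
  | zero => exact fun w hw => ⟨[], hG.connected.dist_eq_zero_iff.mp hw⟩
  | succ n ih =>
    intro w hw
    have hwr : w ≠ r := by rintro rfl; simp at hw
    obtain ⟨x, hx⟩ := hG.exists_mem_children r hwr
    obtain ⟨l, rfl⟩ := ih x (by have := hx.2; omega)
    exact ⟨e _ ⟨w, hx⟩ :: l, by simp [descend]⟩

theorem descend_mem_children_iff {l l' : List A} :
    descend r e l' ∈ G.children r (descend r e l) ↔ ∃ a, l' = a :: l := by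
  refine ⟨fun h => ?_, fun ⟨a, hl'⟩ => hl' ▸ descend_cons_mem_children e a l⟩
  cases l' with
  | nil => simpa [descend, children] using h.2
  | cons a m =>
    exact ⟨a, by rw [descend_injective e hG
      (hG.eq_of_mem_children r (descend_cons_mem_children e a m) h)]⟩

noncomputable def descendIso : listTree A ≃g G where
  toEquiv := .ofBijective (descend r e) <| .intro (descend_injective e hG) (descend_surjective e hG)
  map_rel_iff' {l l'} := by
    change G.Adj (descend r e l) (descend r e l') ↔ _
    rw [hG.adj_iff_mem_children r, descend_mem_children_iff e hG, descend_mem_children_iff e hG,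
      listTree_adj]

end descend

theorem IsTree.nonempty_iso_listTree {A : Type u} (hG : G.IsTree) (hA : ℵ₀ ≤ #A)
    (hdeg : ∀ v, #(G.neighborSet v) = #A) : Nonempty (listTree A ≃g G) := by
  obtain ⟨r⟩ := hG.connected.nonempty
  exact ⟨descendIso (fun x => (Cardinal.eq.mp (hG.mk_children_eq r hA hdeg x)).some) hG⟩

end SimpleGraph

/-- A tree in which every vertex has degree exactly `α` (an infinite
cardinal) has motion `α`. -/
theorem regular_tree_motion (G : SimpleGraph V) (hT : G.IsTree)
    (α : Cardinal.{u}) (hα : Cardinal.aleph0 ≤ α)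
    (hdeg : ∀ v, Cardinal.mk (G.neighborSet v) = α) :
    HasMotion G α := by
  classical
  have hA : ℵ₀ ≤ #α.out := by rwa [mk_out]
  obtain ⟨ψ⟩ := hT.nonempty_iso_listTree hA (by simpa using hdeg)
  have : Infinite α.out := infinite_iff.mpr hA
  obtain ⟨a, b, hab⟩ := exists_pair_ne α.out
  let φ : G ≃g G := (ψ.symm.trans (listTree.mapIso (Equiv.swap a b))).trans ψ
  have hφ : φ (ψ [a]) ≠ ψ [a] := by
    simpa [φ, listTree.mapIso, Equiv.listEquivOfEquiv] using hab.symm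
  have hmotion := hT.isAcyclic.motionAtLeast hα fun v => (hdeg v).ge
  refine ⟨hmotion, φ, ⟨_, hφ⟩, le_antisymm ?_ (hmotion φ ⟨_, hφ⟩)⟩
  calc #{v | φ v ≠ v} ≤ #V := mk_set_le _
    _ = #(List α.out) := (mk_congr ψ.toEquiv).symm
    _ = α := by rw [mk_list_eq_mk, mk_out]
end

section
/- Let T be a tree containing a double ray and let T_* be the subgraph induced by all vertices of T that lie on some double ray. Then T_* is a nonempty subtree of T, every automorphism of T maps T_* to itself, and every component of T − E(T_*) is rayless. -/
open SimpleGraph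

universe u

variable {V : Type u}

/-!
In a forest, two rays that start at the same vertex but leave it along different edges meet
only there, since paths are unique; glued together they form a double ray. The two halves of a
double ray through `u` leave `u` along different edges, so one of them avoids any given path
ending at `u`, and every path ending in `T_*` extends to a ray whose tail runs inside `T_*`.

An inner vertex `x` of a path between two vertices of `T_*` thus starts two such rays, one in each
direction along the path, so `x ∈ T_*`. Given any ray `r`, extend a path from `r 0` to `T_*` to a
ray `q` in this way: either `r = q`, whose tail lies in `T_*`, or `r` and `q` branch apart at some
`r m`, and then `r m` and `r (m + 1)` lie on a common double ray. Either way `r` uses an edge of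
`T_*`.
-/

namespace SimpleGraph

variable {G : SimpleGraph V}

theorem IsAcyclic.snd_eq_of_mem_support (hG : G.IsAcyclic) {a b c x : V}
    {p : G.Walk a b} {q : G.Walk a c} (hp : p.IsPath) (hq : q.IsPath)
    (hxp : x ∈ p.support) (hxq : x ∈ q.support) (hxa : x ≠ a) : p.snd = q.snd := by
  classical
  rw [← Walk.snd_takeUntil hxa p hxp, ← Walk.snd_takeUntil hxa q hxq]
  have := (hG.subsingleton_path a x).elim ⟨_, hp.takeUntil hxp⟩ ⟨_, hq.takeUntil hxq⟩
  exact congrArg (fun P : G.Path a x => P.1.snd) this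

def IsRay (G : SimpleGraph V) (r : ℕ → V) : Prop :=
  Function.Injective r ∧ ∀ n, G.Adj (r n) (r (n + 1))

def Walk.ofSeq (r : ℕ → V) (hr : ∀ n, G.Adj (r n) (r (n + 1))) : (n : ℕ) → G.Walk (r 0) (r n)
  | 0 => .nil
  | n + 1 => .cons (hr 0) (ofSeq (fun i => r (i + 1)) (fun i => hr (i + 1)) n)

namespace Walk

variable {r : ℕ → V} {hr : ∀ n, G.Adj (r n) (r (n + 1))}

@[simp]
theorem length_ofSeq (n : ℕ) : (ofSeq r hr n).length = n := by
  induction n generalizing r with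
  | zero => rfl
  | succ n ih => simp [ofSeq, ih]

theorem getVert_ofSeq {n i : ℕ} (hi : i ≤ n) : (ofSeq r hr n).getVert i = r i := by
  induction n generalizing r i with
  | zero => simp_all [ofSeq]
  | succ n ih =>
    cases i with
    | zero => simp [ofSeq]
    | succ i => simpa [ofSeq] using ih (Nat.le_of_succ_le_succ hi)

theorem isPath_ofSeq (hinj : Function.Injective r) (n : ℕ) : (ofSeq r hr n).IsPath := by
  rw [← IsPath.getVert_injOn_iff]
  intro i hi j hj hij
  simp only [Set.mem_ofPred_eq, length_ofSeq] at hi hj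
  rw [getVert_ofSeq hi, getVert_ofSeq hj] at hij
  exact hinj hij

end Walk

namespace IsRay

variable {r s : ℕ → V}

theorem snd_eq_of_mem_support (hG : G.IsAcyclic) (hr : G.IsRay r) {u c : V} (hr0 : r 0 = u)
    {q : G.Walk u c} (hq : q.IsPath) {n : ℕ} (hn : r n ∈ q.support) (hn0 : n ≠ 0) :
    r 1 = q.snd := by
  subst hr0
  have hsnd : (Walk.ofSeq r hr.2 n).snd = r 1 := Walk.getVert_ofSeq (by omega)
  rw [← hsnd]
  exact hG.snd_eq_of_mem_support (Walk.isPath_ofSeq hr.1 n) hq (Walk.end_mem_support _) hn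
    (hr.1.ne hn0)

theorem eq_zero_of_snd_ne (hG : G.IsAcyclic) (hr : G.IsRay r) (hs : G.IsRay s)
    (h0 : r 0 = s 0) (h1 : r 1 ≠ s 1) {n m : ℕ} (h : r n = s m) : n = 0 ∧ m = 0 := by
  by_cases hm : m = 0
  · subst hm
    exact ⟨hr.1 (h.trans h0.symm), rfl⟩
  by_cases hn : n = 0
  · subst hn
    exact absurd (hs.1 (h.symm.trans h0)) hm
  refine absurd ?_ h1
  have hsnd : (Walk.ofSeq s hs.2 m).snd = s 1 := Walk.getVert_ofSeq (by omega)
  rw [← hsnd]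
  exact hr.snd_eq_of_mem_support hG h0 (Walk.isPath_ofSeq hs.1 m) (by simp [h]) hn

theorem shift (hr : G.IsRay r) (k : ℕ) : G.IsRay (fun n => r (k + n)) :=
  ⟨fun a b hab => by simpa using hr.1 hab, fun n => hr.2 (k + n)⟩

theorem isDoubleRayIn_glue (hr : G.IsRay r) (hs : G.IsRay s) (h0 : r 0 = s 0)
    (hmeet : ∀ n m, r n = s m → n = 0 ∧ m = 0) :
    IsDoubleRayIn G (fun z : ℤ => if 0 ≤ z then r z.toNat else s (-z).toNat) := by
  constructor
  · intro a b hab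
    by_cases ha : 0 ≤ a <;> by_cases hb : 0 ≤ b <;> simp only [ha, hb, if_true, if_false] at hab
    · have := hr.1 hab; omega
    · have := hmeet _ _ hab; omega
    · have := hmeet _ _ hab.symm; omega
    · have := hs.1 hab; omega
  · intro z
    rcases lt_trichotomy z (-1) with hz | rfl | hz
    · have hsucc : (-z).toNat = (-(z + 1)).toNat + 1 := by omega
      simpa [show ¬ 0 ≤ z by omega, show ¬ 0 ≤ z + 1 by omega, hsucc] using (hs.2 _).symm
    · simpa [h0] using (hs.2 0).symm
    · have hsucc : (z + 1).toNat = z.toNat + 1 := by omega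
      simpa [show 0 ≤ z by omega, show 0 ≤ z + 1 by omega, hsucc] using hr.2 _

theorem mem_Tstar_of_snd_ne (hG : G.IsAcyclic) (hr : G.IsRay r) (hs : G.IsRay s)
    (h0 : r 0 = s 0) (h1 : r 1 ≠ s 1) (n : ℕ) : r n ∈ Tstar G :=
  ⟨_, hr.isDoubleRayIn_glue hs h0 fun _ _ => hr.eq_zero_of_snd_ne hG hs h0 h1, n, by simp⟩

end IsRay

theorem _root_.IsDoubleRayIn.isRay_add {f : ℤ → V} (hf : IsDoubleRayIn G f) (k : ℤ) :
    G.IsRay (fun n : ℕ => f (k + n)) :=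
  ⟨fun a b hab => by simpa using hf.1 hab, fun n => by simpa [add_assoc] using hf.2 (k + n)⟩

theorem _root_.IsDoubleRayIn.isRay_sub {f : ℤ → V} (hf : IsDoubleRayIn G f) (k : ℤ) :
    G.IsRay (fun n : ℕ => f (k - n)) :=
  ⟨fun a b hab => by simpa using hf.1 hab,
    fun n => by simpa [sub_add_eq_sub_sub] using (hf.2 (k - n - 1)).symm⟩

theorem Walk.IsPath.isRay_append {x u : V} {p : G.Walk x u} (hp : p.IsPath) {s : ℕ → V}
    (hs : G.IsRay s) (hs0 : s 0 = u) (hmeet : ∀ n, s n ∈ p.support → n = 0) :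
    G.IsRay (fun n => if n ≤ p.length then p.getVert n else s (n - p.length)) := by
  constructor
  · intro a b hab
    by_cases ha : a ≤ p.length <;> by_cases hb : b ≤ p.length <;>
      simp only [ha, hb, if_true, if_false] at hab
    · exact hp.getVert_injOn ha hb hab
    · have := hmeet _ (hab ▸ p.getVert_mem_support a); omega
    · have := hmeet _ (hab ▸ p.getVert_mem_support b); omega
    · have := hs.1 hab; omega
  · intro n
    rcases lt_trichotomy n p.length with hn | rfl | hn
    · simpa [hn.le, show n + 1 ≤ p.length by omega] using p.adj_getVert_succ hn
    · simpa [hs0] using hs.2 0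
    · have hsucc : n + 1 - p.length = n - p.length + 1 := by omega
      simpa [show ¬ n ≤ p.length by omega, show ¬ n + 1 ≤ p.length by omega, hsucc]
        using hs.2 (n - p.length)

theorem IsAcyclic.exists_isRay_avoiding (hG : G.IsAcyclic) {u y : V} (hu : u ∈ Tstar G)
    {p : G.Walk u y} (hp : p.IsPath) :
    ∃ s, G.IsRay s ∧ s 0 = u ∧ (∀ n, s n ∈ Tstar G) ∧ ∀ n, s n ∈ p.support → n = 0 := by
  obtain ⟨f, hf, k, rfl⟩ := hu
  have hmem : ∀ z, f z ∈ Tstar G := fun z => ⟨f, hf, z, rfl⟩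
  by_cases hfwd : ∀ n : ℕ, f (k + n) ∈ p.support → n = 0
  · exact ⟨_, hf.isRay_add k, by simp, fun n => hmem _, hfwd⟩
  refine ⟨_, hf.isRay_sub k, by simp, fun n => hmem _, fun m hm => by_contra fun hm0 => ?_⟩
  simp only [not_forall] at hfwd
  obtain ⟨n, hn, hn0⟩ := hfwd
  -- both halves of the double ray would leave `u` through the first edge of `p`
  have hfwd1 := (hf.isRay_add k).snd_eq_of_mem_support hG (by simp) hp hn hn0
  have hbwd1 := (hf.isRay_sub k).snd_eq_of_mem_support hG (by simp) hp hm hm0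
  have := hf.1 (hfwd1.trans hbwd1.symm)
  omega

theorem IsAcyclic.exists_isRay_extending (hG : G.IsAcyclic) {x u : V} (hu : u ∈ Tstar G)
    {p : G.Walk x u} (hp : p.IsPath) :
    ∃ q, G.IsRay q ∧ (∀ n ≤ p.length, q n = p.getVert n) ∧ ∀ n, q (p.length + n) ∈ Tstar G := by
  obtain ⟨s, hs, hs0, hsT, hmeet⟩ := hG.exists_isRay_avoiding hu hp.reverse
  refine ⟨_, hp.isRay_append hs hs0 (by simpa using hmeet), fun n hn => if_pos hn, ?_⟩
  rintro (_ | n)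
  · simpa [← hs0] using hsT 0
  · simpa using hsT (n + 1)

theorem IsAcyclic.support_subset_Tstar (hG : G.IsAcyclic) {u v : V} {p : G.Walk u v}
    (hp : p.IsPath) (hu : u ∈ Tstar G) (hv : v ∈ Tstar G) : {w | w ∈ p.support} ⊆ Tstar G := by
  induction p with
  | nil => simpa using hu
  | @cons u x v hux q ih =>
    rw [Walk.cons_isPath_iff] at hp
    have hx : x ∈ Tstar G := by
      by_cases hq : q.Nil
      · exact hq.eq ▸ hv
      -- `x` sends one ray along `q` to `v` and another back through `u`
      obtain ⟨A, hA, hAq, -⟩ := hG.exists_isRay_extending hv hp.1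
      have hxu : (Walk.cons hux.symm .nil : G.Walk x u).IsPath := by simp [hux.ne']
      obtain ⟨B, hB, hBu, -⟩ := hG.exists_isRay_extending hu hxu
      have hq1 : 1 ≤ q.length := Nat.one_le_iff_ne_zero.mpr (mt Walk.length_eq_zero_iff.mp hq)
      have hA0 : A 0 = x := by simp [hAq 0 (Nat.zero_le _)]
      have hA1 : A 1 = q.snd := hAq 1 hq1
      have hB1 : B 1 = u := by simp [hBu 1 le_rfl]
      have hsnd : q.snd ≠ u := fun h => hp.2 (h ▸ q.getVert_mem_support 1)
      simpa [hA0] using hA.mem_Tstar_of_snd_ne hG hB (by simp [hA0, hBu 0 (Nat.zero_le _)])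
        (by rwa [hA1, hB1]) 0
    intro w hw
    rcases (Walk.support_cons _ _ ▸ hw : w ∈ u :: q.support) with _ | ⟨_, hw⟩
    · exact hu
    · exact ih hp.1 hx hv hw

theorem IsTree.connected_induce_Tstar (hT : G.IsTree) {u : V} (hu : u ∈ Tstar G) :
    (G.induce (Tstar G)).Connected :=
  induce_connected_of_patches u hu fun {v} hv => by
    obtain ⟨p, hp⟩ := (hT.connected.preconnected u v).exists_isPath
    exact ⟨_, hT.isAcyclic.support_subset_Tstar hp hu hv, p.start_mem_support,
      p.end_mem_support, p.connected_induce_support.preconnected _ _⟩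

theorem IsAcyclic.exists_adj_mem_Tstar_of_ne (hG : G.IsAcyclic) {r q : ℕ → V}
    (hr : G.IsRay r) (hq : G.IsRay q) (h0 : r 0 = q 0) (hne : r ≠ q) :
    ∃ n, r n ∈ Tstar G ∧ r (n + 1) ∈ Tstar G := by
  classical
  have hex : ∃ n, r n ≠ q n := by
    by_contra! h
    exact hne (funext h)
  have hm0 : Nat.find hex ≠ 0 := fun h => Nat.find_spec hex (h ▸ h0)
  obtain ⟨m, hm⟩ := Nat.exists_eq_succ_of_ne_zero hm0
  have hrm : r m = q m := not_ne_iff.mp (Nat.find_min hex (by omega))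
  have hrm1 : r (m + 1) ≠ q (m + 1) := by
    simpa [hm] using Nat.find_spec hex
  have hmem := (hr.shift m).mem_Tstar_of_snd_ne hG (hq.shift m) (by simpa using hrm)
    (by simpa using hrm1)
  exact ⟨m, by simpa using hmem 0, hmem 1⟩

theorem IsAcyclic.exists_adj_mem_Tstar (hG : G.IsAcyclic) (hconn : G.Preconnected) {u : V}
    (hu : u ∈ Tstar G) {r : ℕ → V} (hr : G.IsRay r) :
    ∃ n, r n ∈ Tstar G ∧ r (n + 1) ∈ Tstar G := by
  obtain ⟨p, hp⟩ := (hconn (r 0) u).exists_isPath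
  obtain ⟨q, hq, hqp, hqT⟩ := hG.exists_isRay_extending hu hp
  by_cases hrq : r = q
  · exact ⟨p.length, hrq ▸ hqT 0, hrq ▸ hqT 1⟩
  · exact hG.exists_adj_mem_Tstar_of_ne hr hq (by simp [hqp 0 (Nat.zero_le _)]) hrq

end SimpleGraph

/-- In a tree with a double ray, `T_*` is a nonempty subtree invariant
under all automorphisms, and every component of `T − E(T_*)` is rayless. -/
theorem Tstar_properties (G : SimpleGraph V) (hT : G.IsTree)
    (hdr : ∃ f : ℤ → V, IsDoubleRayIn G f) :
    (Tstar G).Nonempty ∧ (G.induce (Tstar G)).Connected ∧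
      (∀ φ : G ≃g G, ∀ v ∈ Tstar G, φ v ∈ Tstar G) ∧
      ∀ v : V, Rayless ((G.deleteEdges (TstarEdges G)).induce
        {u | (G.deleteEdges (TstarEdges G)).Reachable v u}) := by
  obtain ⟨f, hf⟩ := hdr
  have hf0 : f 0 ∈ Tstar G := ⟨f, hf, 0, rfl⟩
  refine ⟨⟨_, hf0⟩, hT.connected_induce_Tstar hf0, ?_, fun v r ⟨hinj, hadj⟩ => ?_⟩
  · rintro φ - ⟨g, hg, n, rfl⟩
    exact ⟨φ ∘ g, ⟨φ.injective.comp hg.1, fun n => φ.map_adj_iff.mpr (hg.2 n)⟩, n, rfl⟩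
  · have hadj' := fun n => deleteEdges_adj.mp (hadj n)
    obtain ⟨n, hn, hn1⟩ := hT.isAcyclic.exists_adj_mem_Tstar hT.connected.preconnected hf0
      (r := fun n => (r n : V)) ⟨fun a b h => hinj (Subtype.ext h), fun n => (hadj' n).1⟩
    exact (hadj' n).2 ⟨_, _, rfl, (hadj' n).1, hn, hn1⟩
end

section
/- Let (G,w) be a tree-like rooted graph, i.e., every vertex y of G has a neighbor x such that y lies on every shortest path from x to w. Then the set F of edges yx such that y lies on all shortest x–w paths forms a spanning forest of G with no finite components, and every automorphism of G fixing w maps each component of F onto a component of F. -/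
open SimpleGraph

universe u

variable {V : Type u}

/-!
Orient each edge `yx` of `F` from `y` to `x`. Along it the distance to `w` grows by exactly one,
and `y` is the only such neighbour of `x`: any other would lie on the shortest `x`–`w` path
through `y`, at the same distance from `w` as `y`. So a vertex of a cycle farthest from `w` would
have two such neighbours, and `F` is acyclic; the neighbours provided by tree-likeness lead
arbitrarily far from `w` inside every component. Automorphisms fixing `w` preserve distances,
hence shortest paths to `w`, hence `F`.
-/

namespace SimpleGraph

variable {V' : Type*} {G : SimpleGraph V} {G' : SimpleGraph V'}

lemma Walk.dist_add_dist_of_mem_support {u v z : V} {p : G.Walk u v}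
    (hp : p.length = G.dist u v) (hz : z ∈ p.support) :
    G.dist u z + G.dist z v = G.dist u v := by
  classical
  rw [← length_eq_dist_of_subwalk hp (p.isSubwalk_takeUntil hz),
    ← length_eq_dist_of_subwalk hp (p.isSubwalk_dropUntil hz), ← Walk.length_append,
    Walk.take_spec, hp]

lemma Reachable.dist_map_le (f : G →g G') {u v : V} (hr : G.Reachable u v) :
    G'.dist (f u) (f v) ≤ G.dist u v := by
  obtain ⟨p, hp⟩ := hr.exists_walk_length_eq_dist
  exact hp ▸ p.length_map f ▸ dist_le (p.map f)

lemma Iso.dist_eq (φ : G ≃g G') (u v : V) : G'.dist (φ u) (φ v) = G.dist u v := by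
  by_cases hr : G.Reachable u v
  · refine le_antisymm (hr.dist_map_le φ.toHom) ?_
    simpa using (Iso.reachable_iff.mpr hr : G'.Reachable (φ u) (φ v)).dist_map_le φ.symm.toHom
  · rw [dist_eq_zero_of_not_reachable hr,
      dist_eq_zero_of_not_reachable (mt Iso.reachable_iff.mp hr)]

theorem isAcyclic_of_unique_lower_adj {α : Type*} [LinearOrder α] {F : SimpleGraph V}
    (h : V → α) (hne : ∀ ⦃a b⦄, F.Adj a b → h a ≠ h b)
    (huniq : ∀ ⦃x y y'⦄, F.Adj x y → F.Adj x y' → h y < h x → h y' < h x → y = y') :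
    F.IsAcyclic := by
  classical
  intro a c hc
  obtain ⟨m, hm, hmax⟩ := c.support.toFinset.exists_max_image h ⟨a, by simp⟩
  rw [List.mem_toFinset] at hm
  have hc' := hc.rotate hm
  have hlower : ∀ i, F.Adj m ((c.rotate m hm).getVert i) →
      h ((c.rotate m hm).getVert i) < h m := fun i hadj =>
    lt_of_le_of_ne (hmax _ (List.mem_toFinset.mpr
      ((c.mem_support_rotate_iff m hm).mp ((c.rotate m hm).getVert_mem_support i))))
      (hne hadj).symm
  have hsnd := (c.rotate m hm).adj_snd hc'.not_nil
  have hpen := ((c.rotate m hm).adj_penultimate hc'.not_nil).symm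
  exact hc'.snd_ne_penultimate (huniq hsnd hpen (hlower _ hsnd) (hlower _ hpen))

theorem infinite_setOf_reachable_of_forall_exists_adj_lt {F : SimpleGraph V} (h : V → ℕ)
    (hup : ∀ v, ∃ u, F.Adj v u ∧ h v < h u) (v : V) : {u | F.Reachable v u}.Infinite := by
  have hunbounded : ∀ n, ∃ u, F.Reachable v u ∧ n ≤ h u := by
    intro n
    induction n with
    | zero => exact ⟨v, .rfl, Nat.zero_le _⟩
    | succ n ih =>
      obtain ⟨u, hvu, hn⟩ := ih
      obtain ⟨u', hadj, hlt⟩ := hup u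
      exact ⟨u', hvu.trans hadj.reachable, by omega⟩
  refine Set.Infinite.of_image h (Set.infinite_of_not_bddAbove ?_)
  rintro ⟨n, hn⟩
  obtain ⟨u, hvu, hnu⟩ := hunbounded (n + 1)
  have := hn ⟨u, hvu, rfl⟩
  omega

end SimpleGraph

namespace OnAllShortest

variable {V' : Type*} {G : SimpleGraph V} {G' : SimpleGraph V'} {w x y : V}

lemma dist_add_one (hr : G.Reachable x w) (hadj : G.Adj y x) (h : OnAllShortest G w y x) :
    G.dist y w + 1 = G.dist x w := by
  obtain ⟨p, hp⟩ := hr.exists_walk_length_eq_dist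
  rw [← p.dist_add_dist_of_mem_support hp (h p hp), dist_eq_one_iff_adj.mpr hadj.symm,
    add_comm]

lemma eq_of_adj {y' : V} (hr : G.Reachable x w) (hadj : G.Adj y x) (h : OnAllShortest G w y x)
    (hadj' : G.Adj y' x) (h' : OnAllShortest G w y' x) : y = y' := by
  have hd := h.dist_add_one hr hadj
  have hd' := h'.dist_add_one hr hadj'
  obtain ⟨q, hq⟩ := (hadj.reachable.trans hr).exists_walk_length_eq_dist
  have hy' : y' ∈ (Walk.cons hadj.symm q).support := h' _ (by simp [hq, hd])
  rcases (Walk.mem_support_iff _).mp hy' with rfl | hy'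
  · exact absurd rfl hadj'.ne
  · have hsplit := q.dist_add_dist_of_mem_support hq hy'
    exact ((hadj.reachable.trans hadj'.symm.reachable).dist_eq_zero_iff).mp (by omega)

lemma map (φ : G ≃g G') (h : OnAllShortest G w y x) :
    OnAllShortest G' (φ w) (φ y) (φ x) := by
  intro p hp
  have hy := h ((p.map φ.symm.toHom).copy (by simp) (by simp))
    (by rw [Walk.length_copy, Walk.length_map, hp, φ.dist_eq])
  rw [Walk.support_copy, Walk.support_map, List.mem_map] at hy
  obtain ⟨z, hz, rfl⟩ := hy
  simpa using hz

lemma map_iff (φ : G ≃g G') :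
    OnAllShortest G' (φ w) (φ y) (φ x) ↔ OnAllShortest G w y x :=
  ⟨fun h => by simpa using h.map φ.symm, map φ⟩

end OnAllShortest

/-- The graph `F` of the rooted graph `(G, w)`. -/
def parentForest (G : SimpleGraph V) (w : V) : SimpleGraph V :=
  SimpleGraph.fromRel fun y x => G.Adj y x ∧ OnAllShortest G w y x

section parentForest

variable {V' : Type*} {G : SimpleGraph V} {G' : SimpleGraph V'} {w : V}

lemma parentForest_le : parentForest G w ≤ G := fun u v huv => by
  rcases (fromRel_adj _ u v).mp huv with ⟨-, ⟨hadj, -⟩ | ⟨hadj, -⟩⟩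
  exacts [hadj, hadj.symm]

lemma parentForest_adj_of_onAllShortest {x y : V} (hadj : G.Adj y x)
    (h : OnAllShortest G w y x) : (parentForest G w).Adj y x :=
  (fromRel_adj _ y x).mpr ⟨hadj.ne, Or.inl ⟨hadj, h⟩⟩

lemma parentForest_adj_iff_of_dist_lt (hc : G.Preconnected) {x y : V}
    (hlt : G.dist y w < G.dist x w) :
    (parentForest G w).Adj x y ↔ G.Adj y x ∧ OnAllShortest G w y x := by
  refine ⟨fun hxy => ?_, fun ⟨hadj, h⟩ => (parentForest_adj_of_onAllShortest hadj h).symm⟩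
  rcases (fromRel_adj _ x y).mp hxy with ⟨-, ⟨hadj, h⟩ | hyx⟩
  · have := h.dist_add_one (hc y w) hadj
    omega
  · exact hyx

lemma dist_ne_of_parentForest_adj (hc : G.Preconnected) {x y : V}
    (hxy : (parentForest G w).Adj x y) : G.dist x w ≠ G.dist y w := by
  rcases (fromRel_adj _ x y).mp hxy with ⟨-, ⟨hadj, h⟩ | ⟨hadj, h⟩⟩
  · have := h.dist_add_one (hc y w) hadj
    omega
  · have := h.dist_add_one (hc x w) hadj
    omega

theorem isAcyclic_parentForest (hc : G.Preconnected) : (parentForest G w).IsAcyclic :=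
  isAcyclic_of_unique_lower_adj (G.dist · w) (fun _ _ => dist_ne_of_parentForest_adj hc)
    fun x _ _ hy hy' hlt hlt' =>
      let ⟨hadj, h⟩ := (parentForest_adj_iff_of_dist_lt hc hlt).mp hy
      let ⟨hadj', h'⟩ := (parentForest_adj_iff_of_dist_lt hc hlt').mp hy'
      h.eq_of_adj (hc x w) hadj hadj' h'

def SimpleGraph.Iso.parentForest (φ : G ≃g G') :
    parentForest G w ≃g parentForest G' (φ w) where
  toEquiv := φ.toEquiv
  map_rel_iff' {a b} := by
    change (_root_.parentForest G' (φ w)).Adj (φ a) (φ b) ↔ _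
    simp [_root_.parentForest, fromRel_adj, OnAllShortest.map_iff, φ.map_adj_iff]

end parentForest

/-- In a tree-like rooted graph `(G,w)`, the edges `yx` such that `y` lies
on all shortest `x`–`w` paths form a spanning forest of `G` without finite components,
and every automorphism of `G` fixing `w` maps components of this forest onto components. -/
theorem tree_like_forest (G : SimpleGraph V) (hc : G.Connected) (w : V)
    (htl : ∀ y, ∃ x, G.Adj y x ∧ OnAllShortest G w y x) :
    (∀ u v, (SimpleGraph.fromRel (fun y x => G.Adj y x ∧ OnAllShortest G w y x)).Adj u v →
        G.Adj u v) ∧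
      (SimpleGraph.fromRel (fun y x => G.Adj y x ∧ OnAllShortest G w y x)).IsAcyclic ∧
      (∀ y, ∃ x,
        (SimpleGraph.fromRel (fun y x => G.Adj y x ∧ OnAllShortest G w y x)).Adj y x) ∧
      (∀ v, {u | (SimpleGraph.fromRel
        (fun y x => G.Adj y x ∧ OnAllShortest G w y x)).Reachable v u}.Infinite) ∧
      (∀ φ : G ≃g G, φ w = w → ∀ u v,
        ((SimpleGraph.fromRel (fun y x => G.Adj y x ∧ OnAllShortest G w y x)).Reachable u v ↔
          (SimpleGraph.fromRel
            (fun y x => G.Adj y x ∧ OnAllShortest G w y x)).Reachable (φ u) (φ v))) := by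
  have hup : ∀ y, ∃ x, (parentForest G w).Adj y x ∧ G.dist y w < G.dist x w := fun y =>
    let ⟨x, hadj, h⟩ := htl y
    ⟨x, parentForest_adj_of_onAllShortest hadj h,
      (h.dist_add_one (hc.preconnected x w) hadj).symm ▸ Nat.lt_succ_self _⟩
  refine ⟨fun _ _ huv => parentForest_le huv, isAcyclic_parentForest hc.preconnected,
    fun y => (hup y).imp fun _ => And.left,
    infinite_setOf_reachable_of_forall_exists_adj_lt (G.dist · w) hup, fun φ hw u v => ?_⟩
  have hφ : (parentForest G (φ w)).Reachable (φ u) (φ v) ↔ (parentForest G w).Reachable u v :=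
    φ.parentForest.reachable_iff
  rw [hw] at hφ
  exact hφ.symm
end
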